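/- arXiv:math/0607451 — 2 statements merged into one kernel-verified Lean document; each statement's English description precedes it below -/
import Mathlib

section
/- For any partition λ and any residue f ∈ Z/eZ (e ≥ 2 finite), there exists a partition μ obtained from λ by wrapping on an e-rim hook whose foot node has residue f. -/
noncomputable section

/-- A partition: a weakly decreasing sequence of natural numbers with finite support.
Rows and columns are indexed from `0`. -/
structure Partition' where
  parts : ℕ → ℕ
  antitone : ∀ ⦃i j : ℕ⦄, i ≤ j → parts j ≤ parts i
  finite_support : ∃ N, ∀ i, N ≤ i → parts i = 0

namespace Partition'

/-- The Young diagram of a partition: cells `(i, j)` with `j < λ_i` (0-indexed). -/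
def cells (p : Partition') : Set (ℕ × ℕ) := {x | x.2 < p.parts x.1}

/-- The size `|λ|` of a partition. -/
def size (p : Partition') : ℕ := p.cells.ncard

/-- Two cells are adjacent if they share an edge. -/
def adjacent (a b : ℕ × ℕ) : Prop :=
  (a.1 = b.1 ∧ (a.2 + 1 = b.2 ∨ b.2 + 1 = a.2)) ∨
  (a.2 = b.2 ∧ (a.1 + 1 = b.1 ∨ b.1 + 1 = a.1))

/-- A set of cells is (edge-)connected. -/
def ConnectedSet (S : Set (ℕ × ℕ)) : Prop :=
  ∀ a ∈ S, ∀ b ∈ S, ∃ (n : ℕ) (f : ℕ → ℕ × ℕ),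
    f 0 = a ∧ f n = b ∧ (∀ k < n, adjacent (f k) (f (k + 1))) ∧ (∀ k ≤ n, f k ∈ S)

/-- A set of cells contains no 2×2 square. -/
def No2x2 (S : Set (ℕ × ℕ)) : Prop :=
  ∀ i j : ℕ, ¬ ((i, j) ∈ S ∧ (i + 1, j) ∈ S ∧ (i, j + 1) ∈ S ∧ (i + 1, j + 1) ∈ S)

/-- `AddRimHook p q h` : the partition `q` is obtained from `p` by wrapping on
(a connected skew shape of size `h` containing no 2×2 square, i.e.) a rim hook of length `h`. -/
def AddRimHook (p q : Partition') (h : ℕ) : Prop :=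
  p.cells ⊆ q.cells ∧ (q.cells \ p.cells).ncard = h ∧
    ConnectedSet (q.cells \ p.cells) ∧ No2x2 (q.cells \ p.cells)

/-- The length `λ'_j` of column `j` (0-indexed) of a partition. -/
def colLen (p : Partition') (j : ℕ) : ℕ := {i : ℕ | (i, j) ∈ p.cells}.ncard

/-- The rim hook `r^λ_x` attached to the node `x = (i,j)` of `λ`. -/
def rimHook (p : Partition') (i j : ℕ) : Set (ℕ × ℕ) :=
  {y ∈ p.cells | i ≤ y.1 ∧ j ≤ y.2 ∧ (y.1 + 1, y.2 + 1) ∉ p.cells}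

/-- The leg length of the rim hook `r^λ_{(i,j)}`. -/
def legLength (p : Partition') (i j : ℕ) : ℕ := p.colLen j - 1 - i

/-- The hook length `h^λ_{(i,j)}` of the node `(i,j) ∈ [λ]` (0-indexed). -/
def hookLen (p : Partition') (i j : ℕ) : ℕ := p.parts i + p.colLen j - i - j - 1

/-- The residue mod `e` of the foot node of a rim hook `r^λ_{(i,j)}`; the foot node is
`(λ'_j - 1, j)` (0-indexed), so its residue is `j - λ'_j + 1 = (j+1) - λ'_j` mod `e`. -/
def footRes (e : ℕ) (p : Partition') (j : ℕ) : ZMod e :=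
  (((j : ℤ) + 1 - p.colLen j : ℤ) : ZMod e)

/-- `C_f(λ)` : the number of nodes of `λ` with residue `f` mod `e`, using charge `c`
(the residue of node `(i,j)` (0-indexed) is `j - i + c` mod `e`). -/
def resCount (e : ℕ) (c : ℤ) (p : Partition') (f : ZMod e) : ℕ :=
  {x ∈ p.cells | (((x.2 : ℤ) - x.1 + c : ℤ) : ZMod e) = f}.ncard

/-- The set of β-numbers of `p` with charge `c` : `β_i = λ_i - i + c` (1-indexed rows). -/
def betaSet (p : Partition') (c : ℤ) : Set ℤ :=
  {z | ∃ i : ℕ, z = (p.parts i : ℤ) - (i + 1) + c}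

/-- The dominance order on partitions. -/
def Dominates (p q : Partition') : Prop :=
  ∀ m : ℕ, ∑ i ∈ Finset.range m, q.parts i ≤ ∑ i ∈ Finset.range m, p.parts i

end Partition'

/-!
Encode `λ` by its strictly decreasing `β`-numbers `β k = λ_k - k`; the cells of `λ` on the
diagonal of content `c` are then the first `#{k | c < β k}` ones. If `b = β r` and `b + n` is
not a `β`-number, replacing `b` by `b + n` raises exactly the diagonals of contents
`b, …, b + n - 1` by one cell each: the added cells are the first cells outside `λ` on these
diagonals, consecutive ones are adjacent, and no two lie on a common diagonal, so they form an
`n`-rim hook with foot `(r, λ_r)`, of residue `b`. For `b` the largest `β`-number of residue `f`,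
the value `b + e` is free.
-/

namespace Partition'

lemma adjacent_comm {a b : ℕ × ℕ} : adjacent a b ↔ adjacent b a := by
  unfold adjacent
  tauto

lemma connectedSet_image_Iio {g : ℕ → ℕ × ℕ} {n : ℕ}
    (hg : ∀ t, t + 1 < n → adjacent (g t) (g (t + 1))) : ConnectedSet (g '' Set.Iio n) := by
  rintro _ ⟨s, hs, rfl⟩ _ ⟨t, ht, rfl⟩
  simp only [Set.mem_Iio] at hs ht
  rcases le_total s t with hst | hts
  · refine ⟨t - s, fun k => g (s + k), rfl, congrArg g (by omega), ?_, ?_⟩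
    · exact fun k hk => hg (s + k) (by omega)
    · exact fun k hk => ⟨s + k, by simp only [Set.mem_Iio]; omega, rfl⟩
  · refine ⟨s - t, fun k => g (s - k), rfl, congrArg g (by omega), ?_, ?_⟩
    · intro k hk
      have h := hg (s - (k + 1)) (by omega)
      rwa [show s - (k + 1) + 1 = s - k by omega, adjacent_comm] at h
    · exact fun k hk => ⟨s - k, by simp only [Set.mem_Iio]; omega, rfl⟩

lemma no2x2_of_content_injOn {S : Set (ℕ × ℕ)}
    (hS : ∀ x ∈ S, ∀ y ∈ S, (x.2 : ℤ) - x.1 = (y.2 : ℤ) - y.1 → x = y) : No2x2 S := by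
  rintro i j ⟨hij, -, -, hij'⟩
  have := hS _ hij _ hij' (by push_cast; ring)
  simp at this

variable (p : Partition')

/-- The content of the first cell to the right of row `k`; these are the elements of
`betaSet p 1`. -/
def beta (k : ℕ) : ℤ := p.parts k - k

lemma beta_strictAnti : StrictAnti p.beta := by
  intro k l hkl
  have := p.antitone hkl.le
  simp only [beta]
  omega

lemma exists_beta_eq_neg : ∃ N, ∀ k, N ≤ k → p.beta k = -k := by
  obtain ⟨N, hN⟩ := p.finite_support
  exact ⟨N, fun k hk => by simp [beta, hN k hk]⟩

lemma exists_beta_le (c : ℤ) : ∃ k, p.beta k ≤ c := by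
  obtain ⟨N, hN⟩ := p.exists_beta_eq_neg
  exact ⟨N + c.natAbs, by rw [hN _ (by omega)]; omega⟩

/-- The number of rows `k` with `c < β k`, i.e. the length of the diagonal of content `c`. -/
def depth (c : ℤ) : ℕ := Nat.find (p.exists_beta_le c)

lemma beta_depth_le (c : ℤ) : p.beta (p.depth c) ≤ c :=
  Nat.find_spec (p.exists_beta_le c)

lemma lt_depth_iff {c : ℤ} {k : ℕ} : k < p.depth c ↔ c < p.beta k := by
  rw [depth, Nat.lt_find_iff]
  refine ⟨fun h => not_le.1 (h k le_rfl), fun h m hm => ?_⟩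
  exact not_le.2 (h.trans_le (p.beta_strictAnti.antitone hm))

lemma depth_antitone : Antitone p.depth := fun c _ hcd =>
  not_lt.1 fun h => (p.beta_depth_le c).not_gt (hcd.trans_lt (p.lt_depth_iff.1 h))

lemma depth_le_depth_add_one_add_one (c : ℤ) : p.depth c ≤ p.depth (c + 1) + 1 := by
  by_contra! h
  have h1 := p.lt_depth_iff.1 h
  have h2 := p.beta_depth_le (c + 1)
  have h3 := p.beta_strictAnti (Nat.lt_add_one (p.depth (c + 1)))
  omega

lemma depth_beta (r : ℕ) : p.depth (p.beta r) = r :=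
  eq_of_forall_lt_iff fun k => by rw [p.lt_depth_iff]; exact p.beta_strictAnti.lt_iff_gt

lemma mem_cells_iff_lt_depth {i j : ℕ} : (i, j) ∈ p.cells ↔ i < p.depth (j - i) := by
  rw [lt_depth_iff]
  simp only [cells, Set.mem_ofPred_eq, beta]
  omega

def outerCell (c : ℤ) : ℕ × ℕ := (p.depth c, (p.depth c + c).toNat)

lemma outerCell_content (c : ℤ) : ((p.outerCell c).2 : ℤ) - (p.outerCell c).1 = c := by
  have := p.beta_depth_le c
  simp only [outerCell, beta] at *
  omega

lemma outerCell_injective : Function.Injective p.outerCell := fun c d h => by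
  simpa only [outerCell_content] using congrArg (fun x : ℕ × ℕ => (x.2 : ℤ) - x.1) h

lemma outerCell_beta (r : ℕ) : p.outerCell (p.beta r) = (r, p.parts r) := by
  rw [outerCell, depth_beta]
  congr 1
  simp only [beta]
  omega

lemma adjacent_outerCell_add_one (c : ℤ) : adjacent (p.outerCell c) (p.outerCell (c + 1)) := by
  have h1 := p.depth_antitone (show c ≤ c + 1 by omega)
  have h2 := p.depth_le_depth_add_one_add_one c
  have h3 := p.outerCell_content c
  have h4 := p.outerCell_content (c + 1)
  simp only [adjacent, outerCell] at *
  omega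

def ofBeta (β : ℕ → ℤ) (hβ : StrictAnti β) (hfin : ∃ N, ∀ k, N ≤ k → β k = -k) : Partition' where
  parts k := (β k + k).toNat
  antitone := antitone_nat_of_succ_le fun k => by
    have := hβ (Nat.lt_add_one k)
    omega
  finite_support := by
    obtain ⟨N, hN⟩ := hfin
    exact ⟨N, fun k hk => by simp [hN k hk]⟩

lemma beta_ofBeta (β : ℕ → ℤ) (hβ : StrictAnti β) (hfin : ∃ N, ∀ k, N ≤ k → β k = -k) :
    (ofBeta β hβ hfin).beta = β := by
  obtain ⟨N, hN⟩ := hfin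
  have hanti : Antitone fun k => β k + k := antitone_nat_of_succ_le fun k => by
    have := hβ (Nat.lt_add_one k)
    push_cast
    omega
  funext k
  have h1 : β (max k N) + (max k N : ℕ) ≤ β k + k := hanti (le_max_left k N)
  have h2 := hN _ (le_max_right k N)
  simp only [beta, ofBeta]
  omega

section AddHook

variable (r n : ℕ)

/-- The `β`-numbers of `p` with `β r` moved to `β r + n` and re-sorted: the moved value lands in
row `p.depth (β r + n)`, and the rows in between shift down by one. -/
def addHookBeta (k : ℕ) : ℤ :=
  if k < p.depth (p.beta r + n) ∨ r < k then p.beta k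
  else if k = p.depth (p.beta r + n) then p.beta r + n
  else p.beta (k - 1)

lemma exists_addHookBeta_eq_neg : ∃ N, ∀ k, N ≤ k → p.addHookBeta r n k = -k := by
  obtain ⟨N, hN⟩ := p.exists_beta_eq_neg
  refine ⟨N + r + 1, fun k hk => ?_⟩
  rw [addHookBeta, if_pos (Or.inr (by omega)), hN k (by omega)]

variable {p r n}

lemma depth_beta_add_le (hfree : ∀ k, p.beta k ≠ p.beta r + n) : p.depth (p.beta r + n) ≤ r := by
  have := hfree r
  have := (p.lt_depth_iff (c := p.beta r + n) (k := r)).not.2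
  omega

lemma addHookBeta_strictAnti (hfree : ∀ k, p.beta k ≠ p.beta r + n) :
    StrictAnti (p.addHookBeta r n) := by
  refine strictAnti_nat_of_succ_lt fun k => ?_
  have hi0 := p.depth_beta_add_le hfree
  have hk := p.lt_depth_iff (c := p.beta r + n) (k := k)
  have h1 := p.beta_strictAnti (Nat.lt_add_one k)
  have h0 := hfree k
  have h2 : 0 < k → p.beta k < p.beta (k - 1) := fun hk0 => p.beta_strictAnti (by omega)
  have hn := hfree r
  simp only [addHookBeta, Nat.add_sub_cancel]
  obtain rfl | hkr := eq_or_ne k r <;> split_ifs <;> omega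

lemma lt_addHookBeta_iff (hfree : ∀ k, p.beta k ≠ p.beta r + n) {c : ℤ} {k : ℕ} :
    c < p.addHookBeta r n k ↔ k < p.depth c + if p.beta r ≤ c ∧ c < p.beta r + n then 1 else 0 := by
  have hi0 := p.depth_beta_add_le hfree
  have hk := p.lt_depth_iff (c := p.beta r + n) (k := k)
  have hck := p.lt_depth_iff (c := c) (k := k)
  have hck' := p.lt_depth_iff (c := c) (k := k - 1)
  have hcr := p.lt_depth_iff (c := c) (k := r)
  have h0 := hfree k
  have hlo : c ≤ p.beta r + n → p.depth (p.beta r + n) ≤ p.depth c := fun h => p.depth_antitone h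
  have hhi : p.beta r + n ≤ c → p.depth c ≤ p.depth (p.beta r + n) := fun h => p.depth_antitone h
  have hb : p.beta r ≤ c → p.depth c ≤ r := fun h => p.depth_beta r ▸ p.depth_antitone h
  simp only [addHookBeta]
  split_ifs <;> omega

variable (hfree : ∀ k, p.beta k ≠ p.beta r + n)

def addHook : Partition' :=
  ofBeta (p.addHookBeta r n) (addHookBeta_strictAnti hfree) (p.exists_addHookBeta_eq_neg r n)

lemma depth_addHook (c : ℤ) :
    (addHook hfree).depth c = p.depth c + if p.beta r ≤ c ∧ c < p.beta r + n then 1 else 0 :=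
  eq_of_forall_lt_iff fun k => by
    rw [lt_depth_iff, addHook, beta_ofBeta, lt_addHookBeta_iff hfree]

lemma cells_subset_addHook : p.cells ⊆ (addHook hfree).cells := by
  rintro ⟨i, j⟩ h
  rw [mem_cells_iff_lt_depth] at h ⊢
  rw [depth_addHook]
  omega

lemma addHook_cells_diff :
    (addHook hfree).cells \ p.cells = (fun t : ℕ => p.outerCell (p.beta r + t)) '' Set.Iio n := by
  ext ⟨i, j⟩
  simp only [Set.mem_sdiff, mem_cells_iff_lt_depth, depth_addHook, Set.mem_image, Set.mem_Iio]
  constructor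
  · rintro ⟨hq, hp⟩
    split_ifs at hq with hc
    · refine ⟨(j - i - p.beta r : ℤ).toNat, by omega, ?_⟩
      rw [show p.beta r + ((j - i - p.beta r : ℤ).toNat : ℤ) = j - i by omega, outerCell]
      congr 1 <;> omega
    · omega
  · rintro ⟨t, ht, hx⟩
    have hc := p.outerCell_content (p.beta r + t)
    rw [hx] at hc
    simp only [outerCell, Prod.mk.injEq] at hx hc
    rw [hc, if_pos (by omega)]
    omega

lemma addRimHook_addHook : AddRimHook p (addHook hfree) n := by
  have hinj : Function.Injective fun t : ℕ => p.outerCell (p.beta r + t) :=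
    p.outerCell_injective.comp ((add_right_injective _).comp Nat.cast_injective)
  refine ⟨cells_subset_addHook hfree, ?_, ?_, ?_⟩
  · rw [addHook_cells_diff, hinj.injOn.ncard_image, Set.ncard_Iio_nat]
  · rw [addHook_cells_diff]
    refine connectedSet_image_Iio fun t _ => ?_
    simpa only [Nat.cast_succ, add_assoc] using p.adjacent_outerCell_add_one (p.beta r + t)
  · rw [addHook_cells_diff]
    refine no2x2_of_content_injOn ?_
    rintro _ ⟨s, -, rfl⟩ _ ⟨t, -, rfl⟩ h
    simp only [outerCell_content] at h
    exact congrArg p.outerCell h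

lemma outerCell_mem_addHook_cells_diff : (r, p.parts r) ∈ (addHook hfree).cells \ p.cells := by
  rw [addHook_cells_diff, ← outerCell_beta]
  have := hfree r
  exact ⟨0, by simp only [Set.mem_Iio]; omega, by simp⟩

lemma fst_le_of_mem_addHook_cells_diff {y : ℕ × ℕ} (hy : y ∈ (addHook hfree).cells \ p.cells) :
    y.1 ≤ r := by
  rw [addHook_cells_diff] at hy
  obtain ⟨t, -, rfl⟩ := hy
  calc p.depth (p.beta r + t) ≤ p.depth (p.beta r) := p.depth_antitone (by omega)
    _ = r := p.depth_beta r

end AddHook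

lemma exists_beta_intCast_eq {e : ℕ} [NeZero e] (f : ZMod e) : ∃ k, (p.beta k : ZMod e) = f := by
  obtain ⟨N, hN⟩ := p.exists_beta_eq_neg
  refine ⟨e * N + (-f).val, ?_⟩
  rw [hN _ (by nlinarith [NeZero.one_le (n := e)])]
  push_cast
  simp

/-- A `β`-number equal to `β r + e` would be an earlier one congruent to `β r`. -/
lemma beta_ne_beta_add {e r : ℕ} (he : 0 < e)
    (hmin : ∀ k < r, (p.beta k : ZMod e) ≠ p.beta r) (k : ℕ) : p.beta k ≠ p.beta r + e := by
  intro hk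
  refine hmin k (p.beta_strictAnti.lt_iff_gt.1 (by omega)) ?_
  rw [hk]
  simp

end Partition'

/-- For any partition `λ` and any residue `f ∈ ℤ/eℤ`, there is a partition `μ` obtained from
`λ` by wrapping on an `e`-rim hook whose foot node (lowest, then leftmost, node of the added
hook) has residue `f`. -/
theorem stmt7 (e : ℕ) (he : 2 ≤ e) (p : Partition') (f : ZMod e) :
    ∃ (q : Partition') (x : ℕ × ℕ), Partition'.AddRimHook p q e ∧
      x ∈ q.cells \ p.cells ∧
      (∀ y ∈ q.cells \ p.cells, y.1 ≤ x.1) ∧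
      (∀ y ∈ q.cells \ p.cells, y.1 = x.1 → x.2 ≤ y.2) ∧
      (((x.2 : ℤ) - x.1 : ℤ) : ZMod e) = f := by
  have : NeZero e := ⟨by omega⟩
  have hex := p.exists_beta_intCast_eq f
  set r := Nat.find hex
  have hr : (p.beta r : ZMod e) = f := Nat.find_spec hex
  have hfree : ∀ k, p.beta k ≠ p.beta r + e :=
    p.beta_ne_beta_add (by omega) fun k hk => hr ▸ Nat.find_min hex hk
  refine ⟨Partition'.addHook hfree, (r, p.parts r), Partition'.addRimHook_addHook hfree,
    Partition'.outerCell_mem_addHook_cells_diff hfree,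
    fun y hy => Partition'.fst_le_of_mem_addHook_cells_diff hfree hy, fun y hy hyr => ?_, ?_⟩
  · obtain ⟨i, j⟩ := y
    obtain rfl : i = r := hyr
    exact not_lt.1 hy.2
  · simpa [Partition'.beta] using hr
end
end

section
/- If e is finite and multipartitions λ of n and μ of m have the same hub, then n ≡ m (mod e) and Wt(λ) − Wt(μ) = r(n−m)/e, where Wt(λ) = Σ_{a=1}^r C_{c_a}(λ) − (1/2) Σ_{f ∈ Z/eZ} (C_f(λ) − C_{f+1}(λ))^2. -/
noncomputable section

namespace Partition'

/-- Removable nodes of residue `f` (with charge `c`) of a partition. -/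
def removableNodes (e : ℕ) (c : ℤ) (p : Partition') (f : ZMod e) : Set (ℕ × ℕ) :=
  {x | x ∈ p.cells ∧ x.2 + 1 = p.parts x.1 ∧ p.parts (x.1 + 1) ≤ x.2 ∧
       (((x.2 : ℤ) - x.1 + c : ℤ) : ZMod e) = f}

/-- Addable nodes of residue `f` (with charge `c`) of a partition. -/
def addableNodes (e : ℕ) (c : ℤ) (p : Partition') (f : ZMod e) : Set (ℕ × ℕ) :=
  {x | x.2 = p.parts x.1 ∧ (x.1 = 0 ∨ x.2 < p.parts (x.1 - 1)) ∧
       (((x.2 : ℤ) - x.1 + c : ℤ) : ZMod e) = f}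

/-- The hub `δ_f(λ)` of an `r`-multipartition `λ` with multicharge `c`. -/
def hub (e r : ℕ) (c : Fin r → ℤ) (lam : Fin r → Partition') (f : ZMod e) : ℤ :=
  ∑ a : Fin r, (((removableNodes e (c a) (lam a) f).ncard : ℤ)
    - ((addableNodes e (c a) (lam a) f).ncard : ℤ))

/-- `C_f(λ)` for an `r`-multipartition `λ` with multicharge `c`. -/
def mresCount (e r : ℕ) (c : Fin r → ℤ) (lam : Fin r → Partition') (f : ZMod e) : ℕ :=
  ∑ a : Fin r, resCount e (c a) (lam a) f

/-- The size `|λ|` of an `r`-multipartition. -/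
def msize (r : ℕ) (lam : Fin r → Partition') : ℕ := ∑ a : Fin r, (lam a).size

/-- Fayers' weight `Wt(λ)` of an `r`-multipartition `λ` with multicharge `c`. -/
def Wt (e r : ℕ) [NeZero e] (c : Fin r → ℤ) (lam : Fin r → Partition') : ℚ :=
  (∑ a : Fin r, (mresCount e r c lam ((c a : ZMod e)) : ℚ))
    - (1 / 2) * ∑ f : ZMod e, ((mresCount e r c lam f : ℚ) - (mresCount e r c lam (f + 1) : ℚ)) ^ 2

end Partition'

/-!
Let `φ_f(k) = [k ≡ f mod e]`. Over the cells of one row, the second difference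
`2 φ_f(k) - φ_f(k + 1) - φ_f(k - 1)` at the content `k` telescopes to terms at the two ends of the
row. The removable node of row `i` and the addable node of row `i + 1` exist exactly when
`λ_{i+1} < λ_i`, and the row ends telescope once more, giving for each component
`#removable f-nodes - #addable f-nodes = 2 C_f - C_{f-1} - C_{f+1} - [f = c]`.
So equal hubs make `D f = C_f(λ) - C_f(μ)` a function on `ℤ/eℤ` with vanishing second
difference, hence constant, say `d`. Then `n - m = e d`, and `Wt` changes by `r d`, since the
quadratic part of `Wt` only sees differences `C_f - C_{f+1}`.
-/

open Finset

lemma sum_range_second_diff (φ : ℤ → ℤ) (k : ℤ) (L : ℕ) :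
    ∑ j ∈ range L, (2 * φ (k + j) - φ (k + j + 1) - φ (k + j - 1)) =
      (φ k - φ (k - 1)) - (φ (k + L) - φ (k + L - 1)) := by
  have htel := sum_range_sub' (fun j : ℕ => φ (k + j) - φ (k + j - 1)) L
  simp only [Nat.cast_zero, add_zero] at htel
  rw [← htel]
  refine sum_congr rfl fun j _ => ?_
  simp only [Nat.cast_add, Nat.cast_one, ← add_assoc, add_sub_cancel_right]
  ring

lemma ncard_eq_sum_range_of_graph (S : Set (ℕ × ℕ)) [DecidablePred (· ∈ S)] (g : ℕ → ℕ) {N : ℕ}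
    (hS : ∀ x ∈ S, x.2 = g x.1 ∧ x.1 < N) :
    S.ncard = ∑ i ∈ range N, if (i, g i) ∈ S then 1 else 0 := by
  have hS' : S = ↑(((range N).filter fun i => (i, g i) ∈ S).image fun i => (i, g i)) := by
    ext ⟨i, j⟩
    simp only [coe_image, coe_filter, mem_range, Set.mem_image, Set.mem_ofPred_eq, Prod.mk.injEq]
    constructor
    · intro hx
      obtain ⟨hj, hi⟩ := hS _ hx
      dsimp only at hj hi
      subst hj
      exact ⟨i, ⟨hi, hx⟩, rfl, rfl⟩
    · rintro ⟨i, ⟨-, hi⟩, rfl, rfl⟩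
      exact hi
  conv_lhs => rw [hS']
  rw [Set.ncard_coe_finset, card_image_of_injective _ fun a b h => (Prod.mk.inj h).1,
    card_filter]

lemma ZMod.apply_eq_apply_zero_of_apply_add_one {e : ℕ} [NeZero e] {α : Type*} (g : ZMod e → α)
    (h : ∀ f, g (f + 1) = g f) (f : ZMod e) : g f = g 0 := by
  have hnat : ∀ k : ℕ, g k = g 0 := by
    intro k
    induction k with
    | zero => simp
    | succ k ih => rw [Nat.cast_succ, h, ih]
  rw [← ZMod.natCast_zmod_val f, hnat]

lemma ZMod.apply_eq_apply_zero_of_second_diff_eq_zero {e : ℕ} [NeZero e] (D : ZMod e → ℤ)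
    (h : ∀ f, 2 * D f - D (f - 1) - D (f + 1) = 0) (f : ZMod e) : D f = D 0 := by
  set Δ : ZMod e → ℤ := fun f => D (f + 1) - D f
  have hΔ : ∀ f, Δ f = Δ 0 := ZMod.apply_eq_apply_zero_of_apply_add_one Δ fun f => by
    have := h (f + 1)
    simp only [add_sub_cancel_right] at this
    simp only [Δ]
    linarith
  have hsum : ∑ f, Δ f = 0 := by
    rw [sum_sub_distrib, Fintype.sum_equiv (Equiv.addRight 1) (fun f => D (f + 1)) D fun _ => rfl,
      sub_self]
  have hΔ0 : Δ 0 = 0 := by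
    simp only [sum_congr rfl fun f _ => hΔ f, sum_const, card_univ, ZMod.card, nsmul_eq_mul] at hsum
    exact (mul_eq_zero.1 hsum).resolve_left (Nat.cast_ne_zero.2 (NeZero.ne e))
  refine ZMod.apply_eq_apply_zero_of_apply_add_one D (fun f => ?_) f
  have := hΔ f
  simp only [Δ] at this hΔ0
  linarith

namespace Partition'

def resInd (e : ℕ) (f : ZMod e) (k : ℤ) : ℤ := if (k : ZMod e) = f then 1 else 0

lemma resInd_sub_one {e : ℕ} (f : ZMod e) (k : ℤ) : resInd e (f - 1) k = resInd e f (k + 1) := by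
  simp only [resInd, Int.cast_add, Int.cast_one, eq_sub_iff_add_eq]

lemma resInd_add_one {e : ℕ} (f : ZMod e) (k : ℤ) : resInd e (f + 1) k = resInd e f (k - 1) := by
  simp only [resInd, Int.cast_sub, Int.cast_one, sub_eq_iff_eq_add]

/-- The charged content of `(i, λ_i)`, the addable position of row `i`; the removable node of
row `i`, when there is one, has content one less. -/
def rowEndContent (c : ℤ) (p : Partition') (i : ℕ) : ℤ := (p.parts i : ℤ) - i + c

lemma ncard_sep_cells_eq_sum_rows (p : Partition') {N : ℕ} (hN : ∀ i, N ≤ i → p.parts i = 0)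
    (P : ℕ × ℕ → Prop) [DecidablePred P] :
    {x ∈ p.cells | P x}.ncard =
      ∑ i ∈ range N, ∑ j ∈ range (p.parts i), if P (i, j) then 1 else 0 := by
  have hcells : {x ∈ p.cells | P x} =
      ↑((range N ×ˢ range (p.parts 0)).filter fun x => x.2 < p.parts x.1 ∧ P x) := by
    ext ⟨i, j⟩
    simp only [cells, Set.mem_ofPred_eq, coe_filter, mem_product, mem_range]
    constructor
    · rintro ⟨hj, hP⟩
      refine ⟨⟨?_, hj.trans_le (p.antitone i.zero_le)⟩, hj, hP⟩
      by_contra! hi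
      simp [hN i hi] at hj
    · exact fun h => h.2
  rw [hcells, Set.ncard_coe_finset, card_filter, sum_product]
  refine sum_congr rfl fun i _ => ?_
  rw [← sum_subset (range_subset_range.2 (p.antitone i.zero_le))]
  · refine sum_congr rfl fun j hj => ?_
    simp [mem_range.1 hj]
  · intro j _ hj
    simp_all

lemma sum_rows_second_diff (φ : ℤ → ℤ) (c : ℤ) (p : Partition') {N : ℕ}
    (hN : ∀ i, N ≤ i → p.parts i = 0) :
    ∑ i ∈ range N, ∑ j ∈ range (p.parts i),
        (2 * φ (j - i + c) - φ (j - i + c + 1) - φ (j - i + c - 1)) =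
      ∑ i ∈ range N, (if p.parts (i + 1) < p.parts i then φ (rowEndContent c p i - 1) else 0)
        - (φ (rowEndContent c p 0)
          + ∑ i ∈ range N, if p.parts (i + 1) < p.parts i then φ (rowEndContent c p (i + 1)) else 0)
        + φ c := by
  set b := rowEndContent c p
  have hrow : ∀ i : ℕ, ∑ j ∈ range (p.parts i),
      (2 * φ (j - i + c) - φ (j - i + c + 1) - φ (j - i + c - 1)) =
        (φ (c - i) - φ (c - (i + 1 : ℕ))) - (φ (b i) - φ (b i - 1)) := by
    intro i
    have h := sum_range_second_diff φ (c - i) (p.parts i)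
    simp only [show ∀ j : ℕ, (j : ℤ) - i + c = c - i + j from fun j => by ring]
    rw [h, show b i = c - i + p.parts i by simp only [b, rowEndContent]; ring]
    push_cast
    ring_nf
  have hcorner : ∀ i : ℕ,
      (if p.parts (i + 1) < p.parts i then φ (b i - 1) else 0)
        - (if p.parts (i + 1) < p.parts i then φ (b (i + 1)) else 0) =
      φ (b i - 1) - φ (b (i + 1)) := by
    intro i
    split_ifs with hlt
    · rfl
    · have heq : p.parts (i + 1) = p.parts i :=
        le_antisymm (p.antitone i.le_succ) (not_lt.1 hlt)
      simp only [b, rowEndContent, heq]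
      push_cast
      ring_nf
  have hcharge := sum_range_sub' (fun i : ℕ => φ (c - i)) N
  have hends := sum_range_sub' (fun i : ℕ => φ (b i)) N
  have hbN : b N = c - N := by simp only [b, rowEndContent, hN N le_rfl]; ring
  have hcorners := sum_congr rfl fun i (_ : i ∈ range N) => hcorner i
  rw [sum_congr rfl fun i _ => hrow i]
  simp only [sum_sub_distrib, Nat.cast_zero, sub_zero] at hcorners hcharge hends ⊢
  rw [hbN] at hends
  linarith

section RowSums

variable {e : ℕ} (c : ℤ) {p : Partition'} {N : ℕ}

lemma resCount_eq_sum_rows (hN : ∀ i, N ≤ i → p.parts i = 0) (f : ZMod e) :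
    (resCount e c p f : ℤ) = ∑ i ∈ range N, ∑ j ∈ range (p.parts i), resInd e f (j - i + c) := by
  classical
  simp only [resCount, ncard_sep_cells_eq_sum_rows p hN, resInd, Nat.cast_sum, Nat.cast_ite,
    Nat.cast_one, Nat.cast_zero]

lemma ncard_removableNodes_eq_sum_rows (hN : ∀ i, N ≤ i → p.parts i = 0) (f : ZMod e) :
    ((removableNodes e c p f).ncard : ℤ) = ∑ i ∈ range N,
      if p.parts (i + 1) < p.parts i then resInd e f (rowEndContent c p i - 1) else 0 := by
  classical
  rw [ncard_eq_sum_range_of_graph _ (fun i => p.parts i - 1)]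
  · push_cast
    refine sum_congr rfl fun i _ => ?_
    have hmem : (i, p.parts i - 1) ∈ removableNodes e c p f ↔
        p.parts (i + 1) < p.parts i ∧ ((rowEndContent c p i - 1 : ℤ) : ZMod e) = f := by
      simp only [removableNodes, cells, Set.mem_ofPred_eq, rowEndContent]
      by_cases hlt : p.parts (i + 1) < p.parts i
      · have hcast : ((p.parts i - 1 : ℕ) : ℤ) - i + c = (p.parts i : ℤ) - i + c - 1 := by omega
        have hcell : p.parts i - 1 < p.parts i ∧ p.parts i - 1 + 1 = p.parts i ∧
            p.parts (i + 1) ≤ p.parts i - 1 := by omega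
        simp only [hcast, hcell, hlt, true_and]
      · simp only [hlt, false_and, iff_false]
        exact fun ⟨_, _, hle, _⟩ => hlt (by omega)
    simp only [hmem, ite_and, resInd]
  · rintro ⟨i, j⟩ ⟨hj, hend, -, -⟩
    refine ⟨by simp only at hend ⊢; omega, ?_⟩
    by_contra! hi
    simp_all [hN i hi]

lemma ncard_addableNodes_eq_sum_rows (hN : ∀ i, N ≤ i → p.parts i = 0) (f : ZMod e) :
    ((addableNodes e c p f).ncard : ℤ) = resInd e f (rowEndContent c p 0) + ∑ i ∈ range N,
      if p.parts (i + 1) < p.parts i then resInd e f (rowEndContent c p (i + 1)) else 0 := by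
  classical
  rw [ncard_eq_sum_range_of_graph _ p.parts (N := N + 1)]
  · push_cast
    rw [sum_range_succ', add_comm]
    congr 1
    · simp [addableNodes, resInd, rowEndContent]
    · refine sum_congr rfl fun i _ => ?_
      by_cases hlt : p.parts (i + 1) < p.parts i
      · simp [addableNodes, resInd, rowEndContent, hlt]
      · simp [addableNodes, hlt]
  · rintro ⟨i, j⟩ ⟨hend, hcorner, -⟩
    refine ⟨hend, ?_⟩
    by_contra! hi
    simp only at hend hi hcorner
    have := hN (i - 1) (by omega)
    omega

end RowSums

lemma ncard_removableNodes_sub_ncard_addableNodes (e : ℕ) (c : ℤ) (p : Partition')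
    (f : ZMod e) :
    ((removableNodes e c p f).ncard : ℤ) - (addableNodes e c p f).ncard =
      2 * resCount e c p f - resCount e c p (f - 1) - resCount e c p (f + 1) -
        if f = c then 1 else 0 := by
  obtain ⟨N, hN⟩ := p.finite_support
  rw [ncard_removableNodes_eq_sum_rows c hN, ncard_addableNodes_eq_sum_rows c hN,
    resCount_eq_sum_rows c hN, resCount_eq_sum_rows c hN, resCount_eq_sum_rows c hN]
  simp only [resInd_sub_one, resInd_add_one, mul_sum, ← sum_sub_distrib]
  rw [sum_rows_second_diff (resInd e f) c p hN]
  simp only [resInd, eq_comm]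
  ring

lemma size_eq_sum_resCount {e : ℕ} [NeZero e] (c : ℤ) (p : Partition') :
    p.size = ∑ f : ZMod e, resCount e c p f := by
  classical
  obtain ⟨N, hN⟩ := p.finite_support
  rw [size, ← Set.sep_true (s := p.cells)]
  simp only [resCount, ncard_sep_cells_eq_sum_rows p hN, if_true]
  rw [sum_comm]
  refine sum_congr rfl fun i _ => ?_
  rw [sum_comm]
  simp

lemma hub_eq_mresCount (e r : ℕ) (c : Fin r → ℤ) (lam : Fin r → Partition') (f : ZMod e) :
    hub e r c lam f = 2 * mresCount e r c lam f - mresCount e r c lam (f - 1) -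
      mresCount e r c lam (f + 1) - ∑ a, if f = c a then 1 else 0 := by
  rw [hub, sum_congr rfl fun a _ => ncard_removableNodes_sub_ncard_addableNodes e (c a) (lam a) f]
  simp only [mresCount, Nat.cast_sum, mul_sum, sum_sub_distrib]

lemma msize_eq_sum_mresCount {e : ℕ} [NeZero e] (r : ℕ) (c : Fin r → ℤ)
    (lam : Fin r → Partition') :
    msize r lam = ∑ f : ZMod e, mresCount e r c lam f := by
  rw [msize, sum_congr rfl fun a _ => size_eq_sum_resCount (e := e) (c a) (lam a)]
  exact sum_comm

lemma Wt_sub_Wt_of_mresCount_eq_add {e r : ℕ} [NeZero e] (c : Fin r → ℤ)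
    (lam mu : Fin r → Partition') (d : ℤ)
    (h : ∀ f, (mresCount e r c lam f : ℤ) = mresCount e r c mu f + d) :
    Wt e r c lam - Wt e r c mu = r * d := by
  have hQ : ∀ f, (mresCount e r c lam f : ℚ) = mresCount e r c mu f + d := fun f => by
    exact_mod_cast h f
  simp only [Wt, hQ, sum_add_distrib, add_sub_add_right_eq_sub, sum_const, card_univ,
    Fintype.card_fin, nsmul_eq_mul]
  ring

end Partition'

theorem stmt15_general (e r n m : ℕ) [NeZero e] (c : Fin r → ℤ)
    (lam mu : Fin r → Partition')
    (hn : Partition'.msize r lam = n) (hm : Partition'.msize r mu = m)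
    (hhub : ∀ f : ZMod e, Partition'.hub e r c lam f = Partition'.hub e r c mu f) :
    (e : ℤ) ∣ (n : ℤ) - m ∧
      Partition'.Wt e r c lam - Partition'.Wt e r c mu = (r : ℚ) * ((n : ℚ) - m) / e := by
  set D : ZMod e → ℤ := fun f => Partition'.mresCount e r c lam f - Partition'.mresCount e r c mu f
  have hD : ∀ f, D f = D 0 := ZMod.apply_eq_apply_zero_of_second_diff_eq_zero D fun f => by
    have := hhub f
    rw [Partition'.hub_eq_mresCount, Partition'.hub_eq_mresCount] at this
    simp only [D]
    linarith
  have hsize : (n : ℤ) - m = e * D 0 := calc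
    (n : ℤ) - m = ∑ f, D f := by
      rw [← hn, ← hm, Partition'.msize_eq_sum_mresCount (e := e) r c,
        Partition'.msize_eq_sum_mresCount (e := e) r c]
      push_cast
      exact (sum_sub_distrib _ _).symm
    _ = e * D 0 := by
      rw [sum_congr rfl fun f _ => hD f, sum_const, card_univ, ZMod.card, nsmul_eq_mul]
  refine ⟨⟨D 0, hsize⟩, ?_⟩
  rw [Partition'.Wt_sub_Wt_of_mresCount_eq_add c lam mu (D 0) fun f => by linarith [hD f]]
  have hsizeQ : (n : ℚ) - m = e * D 0 := by exact_mod_cast hsize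
  rw [hsizeQ, mul_div_assoc, mul_div_cancel_left₀ _ (Nat.cast_ne_zero.2 (NeZero.ne e))]

/-- If multipartitions `λ` of `n` and `μ` of `m` have the same hub, then `n ≡ m (mod e)` and
`Wt(λ) - Wt(μ) = r(n - m)/e`. -/
theorem stmt15 (e r n m : ℕ) [NeZero e] (he : 2 ≤ e) (c : Fin r → ℤ)
    (lam mu : Fin r → Partition')
    (hn : Partition'.msize r lam = n) (hm : Partition'.msize r mu = m)
    (hhub : ∀ f : ZMod e, Partition'.hub e r c lam f = Partition'.hub e r c mu f) :
    (e : ℤ) ∣ (n : ℤ) - m ∧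
      Partition'.Wt e r c lam - Partition'.Wt e r c mu = (r : ℚ) * ((n : ℚ) - m) / e :=
  stmt15_general e r n m c lam mu hn hm hhub
end
end
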